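/- Let (X,ℰ) and (Y,ℱ) be coarse spaces and f : X → Y a map, with induced quantum function φ_f : ℓ∞(Y) → ℓ∞(X), φ_f(g) = g∘f. Then f is expanding (i.e., (f×f)^{-1}(F) ∈ ℰ for every F ∈ ℱ; equivalently, every E ⊆ X×X with (f×f)(E) ∈ ℱ belongs to ℰ) if and only if φ_f is quantum expanding with respect to the induced quantum coarse structures; concretely, if and only if for all relations E ⊆ X×X and all F ∈ ℱ, φ_f*(R_E) ⊆ R_F implies E ∈ ℰ. (By Weaver's classification, every intrinsic quantum relation on the atomic abelian von Neumann algebra ℓ∞(X) is of the form R_E for a unique relation E on X, so this condition expresses that (φ_f*)^{-1} maps the intrinsic coarse structure induced by ℰ into the one induced by ℱ.) -/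

import Mathlib

open scoped ENNReal Classical

noncomputable section

namespace QCG

/-- A (classical) coarse structure on a set `X`. -/
structure IsCoarseStructure (X : Type*) (ℰ : Set (Set (X × X))) : Prop where
  diagonal_mem : {p : X × X | p.1 = p.2} ∈ ℰ
  subset_mem : ∀ E ∈ ℰ, ∀ F : Set (X × X), F ⊆ E → F ∈ ℰ
  inv_mem : ∀ E ∈ ℰ, {p : X × X | (p.2, p.1) ∈ E} ∈ ℰ
  union_mem : ∀ E ∈ ℰ, ∀ F ∈ ℰ, E ∪ F ∈ ℰ
  comp_mem : ∀ E ∈ ℰ, ∀ F ∈ ℰ, {p : X × X | ∃ z : X, (p.1, z) ∈ E ∧ (z, p.2) ∈ F} ∈ ℰ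

/-- `ℓ²(X × ℕ)`, on which `ℓ∞(X) ⊗̄ B(ℓ²)` is realized. -/
abbrev ltwoXN (X : Type*) : Type _ := lp (fun _ : X × ℕ => ℂ) 2

/-- The standard unit vector `δ_(x,n) ∈ ℓ²(X × ℕ)`. -/
def deltaXN {X : Type*} (z : X × ℕ) : ltwoXN X := lp.single 2 z 1

/-- `b` belongs to `ℓ∞(X) ⊗̄ B(ℓ²)`: it acts blockwise, i.e. its matrix entries between
different `X`-blocks vanish. -/
def Blockwise {X : Type*} (b : ltwoXN X →L[ℂ] ltwoXN X) : Prop :=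
  ∀ x y : X, x ≠ y → ∀ m n : ℕ,
    (inner ℂ (b (deltaXN (y, m))) (deltaXN (x, n)) : ℂ) = 0

/-- An orthogonal projection in `ℓ∞(X) ⊗̄ B(ℓ²)`. -/
def IsBlkProj {X : Type*} (p : ltwoXN X →L[ℂ] ltwoXN X) : Prop :=
  Blockwise p ∧ IsIdempotentElem p ∧ IsSelfAdjoint p

/-- `e x y = e_{xy} ⊗ 1`: the operator sending `δ_(y,n)` to `δ_(x,n)` for every `n`
and vanishing on `δ_(z,n)` for `z ≠ y`. -/
def IsMatUnits {X : Type*} (e : X → X → (ltwoXN X →L[ℂ] ltwoXN X)) : Prop :=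
  ∀ (x y z : X) (n : ℕ),
    e x y (deltaXN (z, n)) = if z = y then deltaXN (x, n) else 0

/-- The intrinsic quantum relation `R_E` associated to a relation `E ⊆ X × X`:
`(p, q) ∈ R_E` iff `p (e_{xy} ⊗ 1) q ≠ 0` for some `(x, y) ∈ E`. -/
def RelE {X : Type*} (e : X → X → (ltwoXN X →L[ℂ] ltwoXN X)) (E : Set (X × X))
    (p q : ltwoXN X →L[ℂ] ltwoXN X) : Prop :=
  ∃ w ∈ E, p * e w.1 w.2 * q ≠ 0

/-- `Φ` is the amplification `φ_f ⊗ 1 : ℓ∞(Y) ⊗̄ B(ℓ²) → ℓ∞(X) ⊗̄ B(ℓ²)` of the quantum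
function `φ_f : ℓ∞(Y) → ℓ∞(X)` induced by `f : X → Y`; it sends `(b_y)_{y ∈ Y}` to
`(b_{f x})_{x ∈ X}`, which is encoded by its matrix entries. -/
def IsAmplifiedPullback {X Y : Type*} (f : X → Y)
    (Φ : (ltwoXN Y →L[ℂ] ltwoXN Y) → (ltwoXN X →L[ℂ] ltwoXN X)) : Prop :=
  ∀ b : ltwoXN Y →L[ℂ] ltwoXN Y, Blockwise b →
    ∀ (x x' : X) (m n : ℕ),
      (inner ℂ (Φ b (deltaXN (x', m))) (deltaXN (x, n)) : ℂ) =
        if x = x' then (inner ℂ (b (deltaXN (f x', m))) (deltaXN (f x', n)) : ℂ) else 0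


section Helpers

variable {X : Type*}

lemma deltaXN_apply (z w : X × ℕ) : (deltaXN z : ltwoXN X) w = if w = z then 1 else 0 := by
  classical
  by_cases h : w = z
  · subst h; simp [deltaXN, lp.single_apply_self]
  · simp [deltaXN, lp.single_apply_ne _ _ _ h, h]

lemma inner_delta_left (z : X × ℕ) (v : ltwoXN X) : (inner ℂ (deltaXN z) v : ℂ) = v z := by
  rw [deltaXN, lp.inner_single_left]
  simp [RCLike.inner_apply]

lemma inner_delta_right (v : ltwoXN X) (z : X × ℕ) :
    (inner ℂ v (deltaXN z) : ℂ) = (starRingEnd ℂ) (v z) := by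
  rw [deltaXN, lp.inner_single_right]
  simp [RCLike.inner_apply]

lemma vec_ext {v w : ltwoXN X} (h : ∀ z, v z = w z) : v = w := lp.ext (funext h)

lemma op_ext {T S : ltwoXN X →L[ℂ] ltwoXN X} (h : ∀ z, T (deltaXN z) = S (deltaXN z)) :
    T = S := by
  refine ContinuousLinearMap.ext fun v => ?_
  have hv : HasSum (fun i => lp.single 2 i (v i)) v := lp.hasSum_single ENNReal.ofNat_ne_top v
  have hT : HasSum (fun i => T (lp.single 2 i (v i))) (T v) := hv.mapL T
  have hS : HasSum (fun i => S (lp.single 2 i (v i))) (S v) := hv.mapL S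
  have he : (fun i => T (lp.single 2 i (v i))) = fun i => S (lp.single 2 i (v i)) := by
    funext i
    have h1 : lp.single (E := fun _ : X × ℕ => ℂ) 2 i (v i) = v i • deltaXN i := by
      rw [deltaXN, ← lp.single_smul, smul_eq_mul, mul_one]
    rw [h1, map_smul, map_smul, h i]
  rw [he] at hT
  exact hT.unique hS

lemma adjoint_matunits {e : X → X → (ltwoXN X →L[ℂ] ltwoXN X)} (he : IsMatUnits e)
    (x y : X) (w : X) (n : ℕ) :
    ContinuousLinearMap.adjoint (e x y) (deltaXN (w, n)) =
      if w = x then deltaXN (y, n) else 0 := by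
  apply vec_ext
  rintro ⟨z, k⟩
  have h1 : (ContinuousLinearMap.adjoint (e x y) (deltaXN (w, n))) (z, k)
      = (inner ℂ (deltaXN (z, k)) (ContinuousLinearMap.adjoint (e x y) (deltaXN (w, n))) : ℂ) :=
    (inner_delta_left _ _).symm
  rw [h1, ContinuousLinearMap.adjoint_inner_right, he x y z k]
  rcases eq_or_ne z y with rfl | hz
  · rw [if_pos rfl, inner_delta_right, deltaXN_apply]
    rcases eq_or_ne w x with rfl | hw
    · rw [if_pos rfl, deltaXN_apply]
      simp [Prod.ext_iff, eq_comm]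
    · rw [if_neg hw, if_neg (show ¬(w, n) = ((x, k) : X × ℕ) from fun h => hw (Prod.ext_iff.mp h).1), map_zero]
      simp
  · rw [if_neg hz, inner_zero_left]
    rcases eq_or_ne w x with rfl | hw
    · rw [if_pos rfl, deltaXN_apply]
      simp [Prod.ext_iff, hz]
    · rw [if_neg hw]
      simp

lemma matunits_coord {e : X → X → (ltwoXN X →L[ℂ] ltwoXN X)} (he : IsMatUnits e)
    (x y : X) (v : ltwoXN X) (w : X) (n : ℕ) :
    (e x y v) (w, n) = if w = x then v (y, n) else 0 := by
  rw [← inner_delta_left (w, n) (e x y v), ← ContinuousLinearMap.adjoint_inner_left,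
      adjoint_matunits he]
  by_cases hw : w = x <;> simp [hw, inner_delta_left]

lemma apply_coord_eq_tsum (T : ltwoXN X →L[ℂ] ltwoXN X) (v : ltwoXN X) (z : X × ℕ) :
    (T v) z = ∑' i, ((T (deltaXN i)) z) * v i := by
  rw [← inner_delta_left z (T v), ← ContinuousLinearMap.adjoint_inner_left,
      lp.inner_eq_tsum]
  refine tsum_congr fun i => ?_
  have h2 : (ContinuousLinearMap.adjoint T (deltaXN z)) i
      = (starRingEnd ℂ) ((T (deltaXN i)) z) := by
    rw [← inner_delta_left i, ContinuousLinearMap.adjoint_inner_right, inner_delta_right]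
  rw [RCLike.inner_apply, h2]
  simp [mul_comm]

lemma amp_coord {Y : Type*} {f : X → Y}
    {Φ : (ltwoXN Y →L[ℂ] ltwoXN Y) → (ltwoXN X →L[ℂ] ltwoXN X)}
    (hΦ : IsAmplifiedPullback f Φ)
    {b : ltwoXN Y →L[ℂ] ltwoXN Y} (hb : Blockwise b) (x x' : X) (m n : ℕ) :
    (Φ b (deltaXN (x', m))) (x, n) =
      if x = x' then (b (deltaXN (f x', m))) (f x', n) else 0 := by
  have h := hΦ b hb x x' m n
  rw [inner_delta_right, inner_delta_right] at h
  have h2 := congrArg (starRingEnd ℂ) h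
  simpa [apply_ite (starRingEnd ℂ)] using h2

lemma isBlkProj_diag {e : X → X → (ltwoXN X →L[ℂ] ltwoXN X)} (he : IsMatUnits e) (a : X) :
    IsBlkProj (e a a) := by
  refine ⟨?_, ?_, ?_⟩
  · intro x y hxy m n
    rw [he a a y m]
    by_cases hy : y = a
    · subst hy
      rw [if_pos rfl, inner_delta_right, deltaXN_apply]
      simp [Prod.ext_iff, hxy]
    · rw [if_neg hy, inner_zero_left]
  · apply op_ext
    rintro ⟨z, k⟩
    rw [ContinuousLinearMap.mul_apply, he a a z k]
    by_cases hz : z = a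
    · rw [if_pos hz, he a a a k, if_pos rfl]
    · rw [if_neg hz, map_zero]
  · rw [ContinuousLinearMap.isSelfAdjoint_iff']
    apply op_ext
    rintro ⟨w, n⟩
    rw [adjoint_matunits he, he a a w n]

lemma tsum_block (F : X × ℕ → ℂ) (x : X) (h : ∀ a k, a ≠ x → F (a, k) = 0) :
    ∑' i, F i = ∑' k, F (x, k) := by
  refine (Function.Injective.tsum_eq (g := fun k : ℕ => ((x, k) : X × ℕ)) ?_ ?_).symm
  · intro a b hab
    simpa using hab
  · rintro ⟨a, k⟩ hFi
    rcases eq_or_ne a x with rfl | ha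
    · exact ⟨k, rfl⟩
    · exact absurd (h a k ha) hFi

lemma key_coord {Y : Type*} {f : X → Y}
    {eX : X → X → (ltwoXN X →L[ℂ] ltwoXN X)} (heX : IsMatUnits eX)
    {eY : Y → Y → (ltwoXN Y →L[ℂ] ltwoXN Y)} (heY : IsMatUnits eY)
    {Φ : (ltwoXN Y →L[ℂ] ltwoXN Y) → (ltwoXN X →L[ℂ] ltwoXN X)}
    (hΦ : IsAmplifiedPullback f Φ)
    {p q : ltwoXN Y →L[ℂ] ltwoXN Y} (hp : Blockwise p) (hq : Blockwise q)
    (x y z : X) (m : ℕ) (w : X) (n : ℕ) :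
    ((Φ p * eX x y * Φ q) (deltaXN (z, m))) (w, n) =
      if w = x ∧ z = y then
        ((p * eY (f x) (f y) * q) (deltaXN (f y, m))) (f x, n)
      else 0 := by
  simp only [ContinuousLinearMap.mul_apply]
  by_cases hzy : z = y
  · subst hzy
    have hu : ∀ k, (Φ q (deltaXN (z, m))) (z, k) = (q (deltaXN (f z, m))) (f z, k) := by
      intro k
      rw [amp_coord hΦ hq, if_pos rfl]
    have hv : ∀ (a : X) (k : ℕ), (eX x z ((Φ q) (deltaXN (z, m)))) (a, k)
        = if a = x then (q (deltaXN (f z, m))) (f z, k) else 0 := by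
      intro a k
      rw [matunits_coord heX, hu]
    by_cases hw : w = x
    · subst hw
      rw [if_pos ⟨rfl, rfl⟩, apply_coord_eq_tsum (Φ p), apply_coord_eq_tsum p]
      calc
        ∑' i : X × ℕ, (Φ p (deltaXN i)) (w, n) * (eX w z (Φ q (deltaXN (z, m)))) i
            = ∑' k : ℕ, (Φ p (deltaXN (w, k))) (w, n)
                * (eX w z (Φ q (deltaXN (z, m)))) (w, k) := by
              refine tsum_block _ w fun a k ha => ?_
              rw [hv a k, if_neg ha, mul_zero]
        _ = ∑' k : ℕ, (p (deltaXN (f w, k))) (f w, n) * (q (deltaXN (f z, m))) (f z, k) := by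
              refine tsum_congr fun k => ?_
              rw [amp_coord hΦ hp, if_pos rfl, hv w k, if_pos rfl]
        _ = ∑' k : ℕ, (p (deltaXN (f w, k))) (f w, n)
                * (eY (f w) (f z) (q (deltaXN (f z, m)))) (f w, k) := by
              refine tsum_congr fun k => ?_
              rw [matunits_coord heY, if_pos rfl]
        _ = ∑' j : Y × ℕ, (p (deltaXN j)) (f w, n)
                * (eY (f w) (f z) (q (deltaXN (f z, m)))) j := by
              refine (tsum_block (fun j : Y × ℕ => (p (deltaXN j)) (f w, n)
                * (eY (f w) (f z) (q (deltaXN (f z, m)))) j) (f w) fun u k hu' => ?_).symm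
              simp only [matunits_coord heY]
              rw [if_neg hu', mul_zero]
    · rw [if_neg (by rintro ⟨h1, -⟩; exact hw h1), apply_coord_eq_tsum (Φ p)]
      have hterm : ∀ i : X × ℕ,
          (Φ p (deltaXN i)) (w, n) * (eX x z (Φ q (deltaXN (z, m)))) i = 0 := by
        rintro ⟨a, k⟩
        rcases eq_or_ne a x with rfl | ha
        · rw [amp_coord hΦ hp, if_neg hw, zero_mul]
        · rw [hv a k, if_neg ha, mul_zero]
      exact (tsum_congr hterm).trans tsum_zero
  · have hvz : eX x y (Φ q (deltaXN (z, m))) = 0 := by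
      apply vec_ext
      rintro ⟨a, k⟩
      rw [matunits_coord heX]
      by_cases ha : a = x
      · rw [if_pos ha, amp_coord hΦ hq, if_neg fun h => hzy h.symm]
        simp
      · simp [ha]
    rw [hvz, map_zero]
    simp [hzy]

lemma key_zero {Y : Type*} {f : X → Y}
    {eX : X → X → (ltwoXN X →L[ℂ] ltwoXN X)} (heX : IsMatUnits eX)
    {eY : Y → Y → (ltwoXN Y →L[ℂ] ltwoXN Y)} (heY : IsMatUnits eY)
    {Φ : (ltwoXN Y →L[ℂ] ltwoXN Y) → (ltwoXN X →L[ℂ] ltwoXN X)}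
    (hΦ : IsAmplifiedPullback f Φ)
    {p q : ltwoXN Y →L[ℂ] ltwoXN Y} (hp : Blockwise p) (hq : Blockwise q)
    (x y : X) (hzero : p * eY (f x) (f y) * q = 0) :
    Φ p * eX x y * Φ q = 0 := by
  apply op_ext
  rintro ⟨z, m⟩
  apply vec_ext
  rintro ⟨w, n⟩
  rw [key_coord heX heY hΦ hp hq x y z m w n, hzero]
  simp

end Helpers

/-- A map `f : X → Y` between coarse spaces is expanding (preimages under `f × f` of
entourages are entourages) if and only if the induced quantum function
`φ_f : ℓ∞(Y) → ℓ∞(X)` is quantum expanding: for all relations `E ⊆ X × X` and all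
`F ∈ ℱ`, `φ_f*(R_E) ⊆ R_F` implies `E ∈ ℰ`. -/
theorem statement19 {X Y : Type*} (ℰ : Set (Set (X × X))) (ℱ : Set (Set (Y × Y)))
    (hℰ : IsCoarseStructure X ℰ) (hℱ : IsCoarseStructure Y ℱ) (f : X → Y)
    (eX : X → X → (ltwoXN X →L[ℂ] ltwoXN X)) (heX : IsMatUnits eX)
    (eY : Y → Y → (ltwoXN Y →L[ℂ] ltwoXN Y)) (heY : IsMatUnits eY)
    (Φ : (ltwoXN Y →L[ℂ] ltwoXN Y) → (ltwoXN X →L[ℂ] ltwoXN X))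
    (hΦ : IsAmplifiedPullback f Φ) :
    (∀ F ∈ ℱ, (Prod.map f f) ⁻¹' F ∈ ℰ) ↔
      (∀ E : Set (X × X), ∀ F ∈ ℱ,
        (∀ p q : ltwoXN Y →L[ℂ] ltwoXN Y, IsBlkProj p → IsBlkProj q →
          RelE eX E (Φ p) (Φ q) → RelE eY F p q) →
        E ∈ ℰ) := by
  constructor
  · intro hexp E F hF hcond
    refine hℰ.subset_mem _ (hexp F hF) E ?_
    rintro ⟨x, y⟩ hxyE
    have hpP : IsBlkProj (eY (f x) (f x)) := isBlkProj_diag heY (f x)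
    have hqP : IsBlkProj (eY (f y) (f y)) := isBlkProj_diag heY (f y)
    have hRel : RelE eX E (Φ (eY (f x) (f x))) (Φ (eY (f y) (f y))) := by
      refine ⟨(x, y), hxyE, fun h0 => ?_⟩
      have h1 := key_coord heX heY hΦ hpP.1 hqP.1 x y y 0 x 0
      rw [h0, if_pos ⟨rfl, rfl⟩] at h1
      have h2 : ((eY (f x) (f x) * eY (f x) (f y) * eY (f y) (f y))
          (deltaXN (f y, 0))) (f x, 0) = 1 := by
        simp only [ContinuousLinearMap.mul_apply]
        rw [heY (f y) (f y) (f y) 0, if_pos rfl, heY (f x) (f y) (f y) 0, if_pos rfl,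
            heY (f x) (f x) (f x) 0, if_pos rfl, deltaXN_apply, if_pos rfl]
      rw [h2] at h1
      simp at h1
    obtain ⟨⟨u, v⟩, huvF, hne⟩ := hcond _ _ hpP hqP hRel
    have key : u = f x ∧ v = f y := by
      by_contra hcontra
      apply hne
      apply op_ext
      rintro ⟨a, k⟩
      simp only [ContinuousLinearMap.mul_apply, ContinuousLinearMap.zero_apply]
      rw [heY (f y) (f y) a k]
      by_cases ha : a = f y
      · rw [if_pos ha, heY u v (f y) k]
        by_cases hv2 : f y = v
        · rw [if_pos hv2, heY (f x) (f x) u k]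
          by_cases hu : u = f x
          · exact absurd ⟨hu, hv2.symm⟩ hcontra
          · rw [if_neg hu]
        · rw [if_neg hv2, map_zero]
      · rw [if_neg ha, map_zero, map_zero]
    obtain ⟨rfl, rfl⟩ := key
    exact huvF
  · intro hquant F hF
    refine hquant ((Prod.map f f) ⁻¹' F) F hF ?_
    rintro p q hp hq ⟨⟨x, y⟩, hxy, hne⟩
    refine ⟨(f x, f y), hxy, fun h0 => ?_⟩
    exact hne (key_zero heX heY hΦ hp.1 hq.1 x y h0)


end QCG
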